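/- arXiv:math/0201185 — 3 statements merged into one kernel-verified Lean document; each statement's English description precedes it below -/
import Mathlib

section
/- Every group homomorphism from a nontrivial finite perfect group G to PSL(2, ℝ) = SL(2, ℝ)/{±1} is trivial. (Consequently every nontrivial finite perfect group is 2-unbounded.) -/
open scoped MatrixGroups

/-- A group homomorphism is trivial if it sends every element to the identity. -/
def MonoidHom.IsTrivial {G H : Type*} [Group G] [Group H] (f : G →* H) : Prop :=
  ∀ x : G, f x = 1

/-- A nontrivial perfect finite group `G` is `g`-unbounded if every homomorphism
`G → PSL(g-1, ℂ)` is trivial, and moreover every homomorphism `G → SL(g, ℚ)` is trivial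
when `g` is odd, while every homomorphism `G → PSL(g, ℝ)` is trivial when `g` is even. -/
def IsUnbounded (g : ℕ) (G : Type*) [Group G] : Prop :=
  Nontrivial G ∧ Finite G ∧ commutator G = ⊤ ∧
    (∀ f : G →* Matrix.ProjectiveSpecialLinearGroup (Fin (g - 1)) ℂ, f.IsTrivial) ∧
    (Odd g → ∀ f : G →* Matrix.SpecialLinearGroup (Fin g) ℚ, f.IsTrivial) ∧
    (Even g → ∀ f : G →* Matrix.ProjectiveSpecialLinearGroup (Fin g) ℝ, f.IsTrivial)

/-!
Averaging the standard inner product over a finite subgroup of `SL(2, ℝ)` gives an invariant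
positive definite form `Sᵀ S`; conjugation by `S` then moves the subgroup into `SO(2)`, which is
commutative. Since the centre `{±1}` is finite, the preimage in `SL(2, ℝ)` of a finite subgroup of
`PSL(2, ℝ)` is finite, so finite subgroups of `PSL(2, ℝ)` are commutative as well. A perfect group
has no nontrivial homomorphism with commutative image.
-/

theorem Units.commute_conj_iff {M : Type*} [Monoid M] (u : Mˣ) {a b : M} :
    Commute (u * a * ↑u⁻¹) (u * b * ↑u⁻¹) ↔ Commute a b := by
  simp only [Commute, SemiconjBy, mul_assoc, Units.inv_mul_cancel_left, Units.mul_right_inj]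
  rw [← mul_assoc, ← mul_assoc, Units.mul_left_inj]

theorem Subgroup.finite_comap_of_finite_ker {G Q : Type*} [Group G] [Group Q] (φ : G →* Q)
    [Finite φ.ker] (K : Subgroup Q) [Finite K] : Finite (K.comap φ) := by
  have : Finite (φ.subgroupComap K).ker :=
    Finite.of_injective (fun x => (⟨x.1, congrArg Subtype.val x.2⟩ : φ.ker))
      fun x y h => by have := congrArg Subtype.val h; exact Subtype.ext (Subtype.ext this)
  exact (φ.subgroupComap K).finite_iff_finite_ker_range.mpr ⟨this, inferInstance⟩

theorem MonoidHom.eq_one_of_isMulCommutative_range {G H : Type*} [Group G] [Group H]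
    (hG : commutator G = ⊤) (f : G →* H) [IsMulCommutative f.range] : f = 1 := by
  rw [← f.range_eq_bot_iff, f.range_eq_map, ← hG, commutator_def, Subgroup.map_commutator,
    ← f.range_eq_map, Subgroup.commutator_self_eq_bot_iff.mpr ‹_›]

namespace Matrix

variable {n : Type*} [Fintype n] [DecidableEq n]

theorem commute_of_mem_specialOrthogonalGroup_fin_two {R : Type*} [CommRing R]
    {A B : Matrix (Fin 2) (Fin 2) R} (hA : A ∈ specialOrthogonalGroup (Fin 2) R)
    (hB : B ∈ specialOrthogonalGroup (Fin 2) R) : Commute A B := by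
  obtain ⟨hA₁, hA₂, -⟩ := mem_specialOrthogonalGroup_fin_two_iff.mp hA
  obtain ⟨hB₁, hB₂, -⟩ := mem_specialOrthogonalGroup_fin_two_iff.mp hB
  ext i j
  fin_cases i <;> fin_cases j <;> simp [mul_apply, hA₁, hA₂, hB₁, hB₂] <;> ring

theorem units_conj_mem_specialOrthogonalGroup {R : Type*} [CommRing R] (S : (Matrix n n R)ˣ)
    {A : Matrix n n R} (hA : Aᵀ * ((S : Matrix n n R)ᵀ * S) * A = (S : Matrix n n R)ᵀ * S)
    (hdet : A.det = 1) :
    (S : Matrix n n R) * A * (↑S⁻¹ : Matrix n n R) ∈ specialOrthogonalGroup n R := by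
  refine mem_specialOrthogonalGroup_iff.mpr ⟨(mem_orthogonalGroup_iff' _ _).mpr ?_, ?_⟩
  · calc ((S : Matrix n n R) * A * (↑S⁻¹ : Matrix n n R))ᵀ * (S * A * (↑S⁻¹ : Matrix n n R))
        = (↑S⁻¹ : Matrix n n R)ᵀ * (Aᵀ * ((S : Matrix n n R)ᵀ * S) * A) * ↑S⁻¹ := by
          simp only [transpose_mul, Matrix.mul_assoc]
      _ = 1 := by
          rw [hA, ← Matrix.mul_assoc, ← transpose_mul, Units.mul_inv, transpose_one,
            Matrix.one_mul, Units.mul_inv]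
  · rw [det_units_conj, hdet]

open scoped MatrixOrder in
theorem PosDef.exists_units_transpose_mul_self_eq {P : Matrix n n ℝ} (hP : P.PosDef) :
    ∃ S : (Matrix n n ℝ)ˣ, (S : Matrix n n ℝ)ᵀ * S = P := by
  obtain ⟨S, hS, rfl⟩ :=
    CStarAlgebra.isStrictlyPositive_iff_eq_star_mul_self.mp hP.isStrictlyPositive
  exact ⟨hS.unit, by simp [star_eq_conjTranspose]⟩

theorem exists_posDef_forall_transpose_mul_mul_eq {K : Type*} [Group K] [Finite K]
    (ρ : K →* Matrix n n ℝ) : ∃ P : Matrix n n ℝ, P.PosDef ∧ ∀ k, (ρ k)ᵀ * P * ρ k = P := by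
  classical
  have := Fintype.ofFinite K
  refine ⟨∑ k, (ρ k)ᵀ * ρ k, ?_, fun k => ?_⟩
  · rw [← Finset.add_sum_erase _ _ (Finset.mem_univ 1), map_one, transpose_one, Matrix.one_mul]
    refine PosDef.one.add_posSemidef (posSemidef_sum _ fun k _ => ?_)
    simpa [conjTranspose_eq_transpose_of_trivial] using posSemidef_conjTranspose_mul_self (ρ k)
  · rw [Finset.mul_sum, Finset.sum_mul]
    refine Fintype.sum_equiv (Equiv.mulRight k) _ _ fun j => ?_
    simp only [Equiv.coe_mulRight, map_mul, transpose_mul, Matrix.mul_assoc]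

theorem commute_of_transpose_mul_mul_eq_fin_two {P A B : Matrix (Fin 2) (Fin 2) ℝ}
    (hP : P.PosDef) (hA : Aᵀ * P * A = P) (hB : Bᵀ * P * B = P) (hdA : A.det = 1)
    (hdB : B.det = 1) : Commute A B := by
  obtain ⟨S, rfl⟩ := hP.exists_units_transpose_mul_self_eq
  rw [← S.commute_conj_iff]
  exact commute_of_mem_specialOrthogonalGroup_fin_two
    (units_conj_mem_specialOrthogonalGroup S hA hdA)
    (units_conj_mem_specialOrthogonalGroup S hB hdB)

namespace SpecialLinearGroup

instance isMulCommutative_of_finite_fin_two (H : Subgroup (SpecialLinearGroup (Fin 2) ℝ))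
    [Finite H] : IsMulCommutative H := by
  obtain ⟨P, hP, hP_inv⟩ := exists_posDef_forall_transpose_mul_mul_eq (coeMonoidHom.comp H.subtype)
  refine .of_setLike_mul_comm fun a ha b hb => Subtype.ext ?_
  exact commute_of_transpose_mul_mul_eq_fin_two hP (hP_inv ⟨a, ha⟩) (hP_inv ⟨b, hb⟩) a.2 b.2

instance finite_center {R : Type*} [CommRing R] [IsDomain R] [Nonempty n] :
    Finite (Subgroup.center (SpecialLinearGroup n R)) :=
  .of_equiv _ (center_equiv_rootsOfUnity' (Classical.arbitrary n)).symm.toEquiv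

end SpecialLinearGroup

namespace ProjectiveSpecialLinearGroup

instance isMulCommutative_of_finite_fin_two
    (K : Subgroup (ProjectiveSpecialLinearGroup (Fin 2) ℝ)) [Finite K] : IsMulCommutative K := by
  let π := QuotientGroup.mk' (Subgroup.center (SpecialLinearGroup (Fin 2) ℝ))
  have : Finite π.ker := by rw [QuotientGroup.ker_mk']; infer_instance
  have := Subgroup.finite_comap_of_finite_ker π K
  rw [← Subgroup.map_comap_eq_self_of_surjective (QuotientGroup.mk'_surjective _) K]
  infer_instance

end ProjectiveSpecialLinearGroup

end Matrix

/-- Every group homomorphism from a nontrivial finite perfect group `G` to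
`PSL(2, ℝ) = SL(2, ℝ)/{±1}` is trivial; consequently every nontrivial finite perfect
group is `2`-unbounded. -/
theorem every_hom_perfect_to_PSL2R_trivial (G : Type*) [Group G] [Finite G] [Nontrivial G]
    (hperf : commutator G = ⊤) :
    (∀ f : G →* Matrix.ProjectiveSpecialLinearGroup (Fin 2) ℝ, f.IsTrivial) ∧
      IsUnbounded 2 G := by
  have hPSL : ∀ f : G →* Matrix.ProjectiveSpecialLinearGroup (Fin 2) ℝ, f.IsTrivial :=
    fun f x => by
      have : Finite f.range := .of_surjective _ f.rangeRestrict_surjective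
      rw [f.eq_one_of_isMulCommutative_range hperf, MonoidHom.one_apply]
  refine ⟨hPSL, ‹_›, ‹_›, hperf, fun _ _ => ?_, fun h => absurd h (by decide), fun _ => hPSL⟩
  exact Subsingleton.elim (α := Matrix.ProjectiveSpecialLinearGroup (Fin 1) ℂ) _ _
end

section
/- Let m > 1 be an integer and M a finitely generated free module over ℤ/m²ℤ. Every endomorphism of the abelian group M maps the submodule mM into itself, and the restriction map red_m: End(M) → End(mM) is a surjective ring homomorphism with kernel m·End(M); consequently every v in the kernel satisfies v² = 0 = mv. Moreover, every automorphism u of M whose restriction to mM is the identity satisfies u^m = Id; in particular, the kernel of the induced surjection Aut(M) ↠ Aut(mM) is a group of exponent dividing m. -/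
/-- The subgroup `mM = {m·x : x ∈ M}` of an abelian group `M`. -/
def smulSubgroup (m : ℕ) (M : Type*) [AddCommGroup M] : AddSubgroup M :=
  (m • AddMonoidHom.id M).range

/-! Over `ℤ/m²ℤ` the kernel of multiplication by `m` is the ideal `(m)`, so in a free module the
`m`-torsion is exactly `mM`. An endomorphism `f` vanishes on `mM` iff `m • f = 0`, i.e. iff `f`
takes values in the `m`-torsion `mM`; additive maps are `ℤ/m²ℤ`-linear, so projectivity of `M`
lifts `f` along `m • · : M ↠ mM` to `h` with `f = m • h`, and the same lifting makes the
restriction map surjective. Such an `f` kills its own image, so `f * f = 0`, and an automorphism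
`u = 1 + v` that is trivial on `mM` satisfies `u ^ m = 1 + m • v = 1`. -/

section Restrict

variable {M : Type*} [AddCommGroup M] (S : AddSubgroup M)
  (hS : ∀ f : AddMonoid.End M, ∀ x ∈ S, f x ∈ S)

def AddMonoid.End.restrict : AddMonoid.End M →+* AddMonoid.End S where
  toFun f := (f.comp S.subtype).codRestrict S fun x => hS f x x.2
  map_one' := rfl
  map_mul' _ _ := rfl
  map_zero' := rfl
  map_add' _ _ := rfl

@[simp]
theorem AddMonoid.End.restrict_apply (f : AddMonoid.End M) (x : S) :
    (restrict S hS f x : M) = f x :=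
  rfl

theorem AddMonoid.End.restrict_eq_zero_iff {f : AddMonoid.End M} :
    restrict S hS f = 0 ↔ ∀ x ∈ S, f x = 0 := by
  rw [DFunLike.ext_iff]
  simp [Subtype.ext_iff]

end Restrict

theorem AddAut.coe_nsmul {A : Type*} [Add A] (u : AddAut A) (k : ℕ) : ⇑(k • u) = (⇑u)^[k] := by
  induction k with
  | zero => rfl
  | succ k ih => rw [succ_nsmul, coe_add, ih, Function.iterate_succ]

theorem one_add_pow_of_mul_self_eq_zero {R : Type*} [Semiring R] {v : R} (hv : v * v = 0)
    (k : ℕ) : (1 + v) ^ k = 1 + k • v := by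
  induction k with
  | zero => simp
  | succ k ih =>
    rw [pow_succ, ih, mul_add, add_mul, add_mul, one_mul, one_mul, mul_one, smul_mul_assoc, hv,
      smul_zero, add_zero, succ_nsmul, add_assoc]

theorem ZMod.exists_natCast_mul_eq_of_natCast_mul_eq_zero {m : ℕ} (hm : m ≠ 0)
    {r : ZMod (m ^ 2)} (h : (m : ZMod (m ^ 2)) * r = 0) : ∃ s, (m : ZMod (m ^ 2)) * s = r := by
  obtain ⟨k, rfl⟩ := ZMod.intCast_surjective r
  rw [← Int.cast_natCast, ← Int.cast_mul, ZMod.intCast_zmod_eq_zero_iff_dvd, Nat.cast_pow, sq]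
    at h
  obtain ⟨t, rfl⟩ := (mul_dvd_mul_iff_left (by exact_mod_cast hm)).mp h
  exact ⟨t, by push_cast; rfl⟩

theorem Module.Free.exists_smul_eq_of_smul_eq_zero {R M : Type*} [Semiring R] [AddCommMonoid M]
    [Module R M] [Module.Free R M] {a c : R} (hac : ∀ r : R, a * r = 0 → ∃ s, c * s = r)
    {y : M} (hy : a • y = 0) : ∃ x, c • x = y := by
  let b := Module.Free.chooseBasis R M
  have hcoord : ∀ i, ∃ s, c * s = b.repr y i := fun i =>
    hac _ (by rw [← smul_eq_mul, ← Finsupp.smul_apply, ← map_smul, hy, map_zero,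
      Finsupp.zero_apply])
  choose s hs using hcoord
  refine ⟨(b.repr y).sum fun i _ => s i • b i, ?_⟩
  conv_rhs => rw [← b.linearCombination_repr y, Finsupp.linearCombination_apply]
  simp only [Finsupp.smul_sum, smul_smul, hs]
  rfl

theorem Module.Projective.exists_smul_eq {R M N : Type*} [CommSemiring R] [AddCommMonoid M]
    [Module R M] [AddCommMonoid N] [Module R N] [Module.Projective R M] {a : R}
    (f : M →ₗ[R] N) (hf : ∀ x, ∃ y, a • y = f x) : ∃ h : M →ₗ[R] N, a • h = f := by
  let g := (a • LinearMap.id : N →ₗ[R] N).rangeRestrict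
  obtain ⟨h, hh⟩ := Module.projective_lifting_property g (f.codRestrict _ hf)
    (LinearMap.surjective_rangeRestrict _)
  exact ⟨h, LinearMap.ext fun x => congrArg Subtype.val (LinearMap.congr_fun hh x)⟩

section smulSubgroup

variable {m : ℕ} {M : Type*} [AddCommGroup M]

theorem mem_smulSubgroup_iff {y : M} : y ∈ smulSubgroup m M ↔ ∃ x, m • x = y :=
  Iff.rfl

theorem map_mem_smulSubgroup (f : M →+ M) {y : M} (hy : y ∈ smulSubgroup m M) :
    f y ∈ smulSubgroup m M := by
  obtain ⟨x, rfl⟩ := hy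
  exact ⟨f x, (map_nsmul f m x).symm⟩

theorem forall_mem_smulSubgroup_eq_zero_iff (f : AddMonoid.End M) :
    (∀ y ∈ smulSubgroup m M, f y = 0) ↔ m • f = 0 := by
  simp only [mem_smulSubgroup_iff, forall_exists_index, forall_apply_eq_imp_iff, map_nsmul,
    DFunLike.ext_iff]
  rfl

variable (m M) in
abbrev restrictSmulSubgroup : AddMonoid.End M →+* AddMonoid.End (smulSubgroup m M) :=
  AddMonoid.End.restrict _ fun f _ => map_mem_smulSubgroup f

theorem restrictSmulSubgroup_eq_zero_iff (f : AddMonoid.End M) :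
    restrictSmulSubgroup m M f = 0 ↔ m • f = 0 :=
  (AddMonoid.End.restrict_eq_zero_iff _ _).trans (forall_mem_smulSubgroup_eq_zero_iff f)

variable [Module (ZMod (m ^ 2)) M]

theorem nsmul_nsmul_eq_zero (x : M) : m • m • x = 0 := by
  rw [smul_smul, ← sq, ← Nat.cast_smul_eq_nsmul (ZMod (m ^ 2)), ZMod.natCast_self, zero_smul]

variable [Module.Free (ZMod (m ^ 2)) M]

theorem mem_smulSubgroup_of_nsmul_eq_zero (hm : m ≠ 0) {y : M} (hy : m • y = 0) :
    y ∈ smulSubgroup m M := by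
  obtain ⟨x, hx⟩ := Module.Free.exists_smul_eq_of_smul_eq_zero
    (fun _ => ZMod.exists_natCast_mul_eq_of_natCast_mul_eq_zero hm)
    (by rwa [Nat.cast_smul_eq_nsmul] : (m : ZMod (m ^ 2)) • y = 0)
  exact ⟨x, by rwa [Nat.cast_smul_eq_nsmul] at hx⟩

theorem exists_nsmul_eq_of_forall_mem_smulSubgroup (f : M →+ M)
    (hf : ∀ x, f x ∈ smulSubgroup m M) : ∃ h : M →+ M, m • h = f := by
  obtain ⟨h, hh⟩ := Module.Projective.exists_smul_eq (a := (m : ZMod (m ^ 2)))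
    (f.toZModLinearMap (m ^ 2)) fun x => by
      obtain ⟨y, hy⟩ := hf x
      exact ⟨y, by rw [Nat.cast_smul_eq_nsmul]; exact hy⟩
  refine ⟨h.toAddMonoidHom, AddMonoidHom.ext fun x => ?_⟩
  simpa [Nat.cast_smul_eq_nsmul] using LinearMap.congr_fun hh x

theorem nsmul_eq_zero_iff_exists_eq_nsmul (hm : m ≠ 0) (f : AddMonoid.End M) :
    m • f = 0 ↔ ∃ h : AddMonoid.End M, f = m • h := by
  constructor
  · intro hf
    obtain ⟨h, hh⟩ := exists_nsmul_eq_of_forall_mem_smulSubgroup f fun x =>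
      mem_smulSubgroup_of_nsmul_eq_zero hm (DFunLike.congr_fun hf x)
    exact ⟨h, hh.symm⟩
  · rintro ⟨h, rfl⟩
    ext x
    exact nsmul_nsmul_eq_zero (h x)

theorem mul_self_eq_zero_of_nsmul_eq_zero (hm : m ≠ 0) {f : AddMonoid.End M} (hf : m • f = 0) :
    f * f = 0 := by
  ext x
  exact (forall_mem_smulSubgroup_eq_zero_iff f).mpr hf _
    (mem_smulSubgroup_of_nsmul_eq_zero hm (DFunLike.congr_fun hf x))

theorem restrictSmulSubgroup_surjective : Function.Surjective (restrictSmulSubgroup m M) := by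
  intro g
  let mul_m : M →+ smulSubgroup m M := (m • AddMonoidHom.id M).rangeRestrict
  obtain ⟨f, hf⟩ := exists_nsmul_eq_of_forall_mem_smulSubgroup
    ((smulSubgroup m M).subtype.comp (g.comp mul_m)) fun x => (g (mul_m x)).2
  refine ⟨f, DFunLike.ext _ _ fun y => Subtype.ext ?_⟩
  obtain ⟨x, rfl⟩ := (m • AddMonoidHom.id M).rangeRestrict_surjective y
  change f (m • x) = (g (mul_m x) : M)
  rw [map_nsmul]
  exact DFunLike.congr_fun hf x

theorem nsmul_eq_zero_of_forall_mem_smulSubgroup_apply_eq (hm : m ≠ 0) (u : AddAut M)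
    (hu : ∀ x ∈ smulSubgroup m M, u x = x) : m • u = 0 := by
  let U : AddMonoid.End M := u.toAddMonoidHom
  let v : AddMonoid.End M := U - 1
  have hv : m • v = 0 :=
    (forall_mem_smulSubgroup_eq_zero_iff v).mp fun x hx => sub_eq_zero.mpr (hu x hx)
  have hpow : (1 + v) ^ m = 1 := by
    rw [one_add_pow_of_mul_self_eq_zero (mul_self_eq_zero_of_nsmul_eq_zero hm hv), hv, add_zero]
  have hU : 1 + v = U := add_sub_cancel _ _
  ext x
  rw [AddAut.coe_nsmul]
  change (U ^ m) x = x
  rw [← hU, hpow]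
  rfl

end smulSubgroup

theorem reduction_mod_m_of_free_module_general
    (m : ℕ) (hm : 1 < m) (M : Type*) [AddCommGroup M] [Module (ZMod (m ^ 2)) M]
    [Module.Free (ZMod (m ^ 2)) M] :
    (∀ f : M →+ M, ∀ x ∈ smulSubgroup m M, f x ∈ smulSubgroup m M) ∧
    (∃ red : AddMonoid.End M →+* AddMonoid.End (smulSubgroup m M),
      (∀ (f : AddMonoid.End M) (x : M) (hx : x ∈ smulSubgroup m M),
        ((red f) ⟨x, hx⟩ : M) = f x) ∧
      Function.Surjective red ∧
      (∀ f : AddMonoid.End M, red f = 0 ↔ ∃ h : AddMonoid.End M, f = m • h) ∧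
      (∀ f : AddMonoid.End M, red f = 0 → f * f = 0 ∧ m • f = 0)) ∧
    (∀ u : AddAut M, (∀ x ∈ smulSubgroup m M, u x = x) → m • u = 0) := by
  have hm0 : m ≠ 0 := by omega
  refine ⟨fun f _ => map_mem_smulSubgroup f,
    ⟨restrictSmulSubgroup m M, fun _ _ _ => rfl, restrictSmulSubgroup_surjective,
      fun f => ?_, fun f hf => ?_⟩,
    fun u => nsmul_eq_zero_of_forall_mem_smulSubgroup_apply_eq hm0 u⟩
  · rw [restrictSmulSubgroup_eq_zero_iff]
    exact nsmul_eq_zero_iff_exists_eq_nsmul hm0 f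
  · rw [restrictSmulSubgroup_eq_zero_iff] at hf
    exact ⟨mul_self_eq_zero_of_nsmul_eq_zero hm0 hf, hf⟩

/-- Let `m > 1` and let `M` be a finitely generated free module over `ℤ/m²ℤ`. Every
endomorphism of the abelian group `M` maps `mM` into itself; the restriction map
`red_m : End(M) → End(mM)` is a surjective ring homomorphism with kernel `m·End(M)`, and
every `v` in the kernel satisfies `v² = 0 = m·v`. Moreover every automorphism `u` of `M`
restricting to the identity on `mM` satisfies `u^m = 1`; in particular the kernel of the
induced surjection `Aut(M) ↠ Aut(mM)` has exponent dividing `m`. -/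
theorem reduction_mod_m_of_free_module
    (m : ℕ) (hm : 1 < m) (M : Type*) [AddCommGroup M] [Module (ZMod (m ^ 2)) M]
    [Module.Free (ZMod (m ^ 2)) M] [Module.Finite (ZMod (m ^ 2)) M] :
    (∀ f : M →+ M, ∀ x ∈ smulSubgroup m M, f x ∈ smulSubgroup m M) ∧
    (∃ red : AddMonoid.End M →+* AddMonoid.End (smulSubgroup m M),
      (∀ (f : AddMonoid.End M) (x : M) (hx : x ∈ smulSubgroup m M),
        ((red f) ⟨x, hx⟩ : M) = f x) ∧
      Function.Surjective red ∧
      (∀ f : AddMonoid.End M, red f = 0 ↔ ∃ h : AddMonoid.End M, f = m • h) ∧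
      (∀ f : AddMonoid.End M, red f = 0 → f * f = 0 ∧ m • f = 0)) ∧
    (∀ u : AddAut M, (∀ x ∈ smulSubgroup m M, u x = x) → m • u = 0) :=
  reduction_mod_m_of_free_module_general m hm M
end

section
/- Let G be a simple non-abelian finite group and γ: G′ ↠ G a minimal cover with kernel N. Then every normal subgroup of G′ other than G′ itself is contained in N; and if ρ: G′ → M is any nontrivial group homomorphism, then ker(ρ) ⊆ N and the image ρ(G′), with the surjection onto G induced by γ, is again a minimal cover of G. If moreover γ is a minimal ℓ-cover, then so is the induced cover ρ(G′) ↠ G. -/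
/-- A surjective homomorphism `γ : G' ↠ G` is a minimal cover if its kernel is a group of
exponent `1` or `ℓ` for some prime `ℓ`, and no proper subgroup of `G'` maps onto `G`. -/
def IsMinimalCover {G' G : Type*} [Group G'] [Group G] (γ : G' →* G) : Prop :=
  Function.Surjective γ ∧
    (∃ ℓ : ℕ, ℓ.Prime ∧ ∀ x ∈ γ.ker, x ^ ℓ = 1) ∧
    (∀ H' : Subgroup G', H'.map γ = ⊤ → H' = ⊤)

/-- A minimal cover `γ : G' ↠ G` is a minimal `ℓ`-cover if its kernel is trivial or of
exponent `ℓ`. -/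
def IsMinimalLCover {G' G : Type*} [Group G'] [Group G] (γ : G' →* G) (ℓ : ℕ) : Prop :=
  Function.Surjective γ ∧
    (∀ x ∈ γ.ker, x ^ ℓ = 1) ∧
    (∀ H' : Subgroup G', H'.map γ = ⊤ → H' = ⊤)

/-- Let `G` be a simple non-abelian finite group and `γ : G' ↠ G` a minimal cover with kernel
`N`. Then every normal subgroup of `G'` other than `G'` itself is contained in `N`; and for
every nontrivial homomorphism `ρ : G' → M`, `ker ρ ⊆ N` and the image `ρ(G')`, with the
surjection onto `G` induced by `γ`, is again a minimal cover of `G`; if moreover `γ` is a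
minimal `ℓ`-cover, so is the induced cover `ρ(G') ↠ G`. -/
theorem minimal_cover_normal_subgroups_and_images
    (G G' : Type*) [Group G] [Group G'] [Finite G] [Finite G'] [IsSimpleGroup G]
    (hna : ∃ a b : G, a * b ≠ b * a)
    (γ : G' →* G) (hγ : IsMinimalCover γ) :
    (∀ K : Subgroup G', K.Normal → K ≠ ⊤ → K ≤ γ.ker) ∧
    (∀ (M : Type*) [Group M] (ρ : G' →* M), (∃ x, ρ x ≠ 1) →
      ρ.ker ≤ γ.ker ∧
      ∃ δ : ρ.range →* G,
        (∀ x : G', δ ⟨ρ x, MonoidHom.mem_range.mpr ⟨x, rfl⟩⟩ = γ x) ∧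
        IsMinimalCover δ ∧
        (∀ ℓ : ℕ, ℓ.Prime → (∀ x ∈ γ.ker, x ^ ℓ = 1) → IsMinimalLCover δ ℓ)) := by

  obtain ⟨hsurj, ⟨ℓ0, hℓ0, hexp0⟩, hmin⟩ := hγ
  have key : ∀ K : Subgroup G', K.Normal → K ≠ ⊤ → K ≤ γ.ker := by
    intro K hK hKne
    have hmapn : (K.map γ).Normal := Subgroup.Normal.map hK γ hsurj
    rcases hmapn.eq_bot_or_eq_top with hb | ht
    · exact (Subgroup.map_eq_bot_iff K).mp hb
    · exact absurd (hmin K ht) hKne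
  refine ⟨key, ?_⟩
  intro M _ ρ hρ
  have hker : ρ.ker ≤ γ.ker := by
    apply key _ (MonoidHom.normal_ker ρ)
    intro h
    obtain ⟨x, hx⟩ := hρ
    exact hx (MonoidHom.mem_ker.mp (h ▸ Subgroup.mem_top x))
  refine ⟨hker, ?_⟩
  set e := QuotientGroup.quotientKerEquivRange ρ with he
  set δ : ρ.range →* G :=
    (QuotientGroup.lift ρ.ker γ (fun x hx => MonoidHom.mem_ker.mp (hker hx))).comp
      e.symm.toMonoidHom with hδ
  have hnat : ∀ x : G', δ ⟨ρ x, MonoidHom.mem_range.mpr ⟨x, rfl⟩⟩ = γ x := by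
    intro x
    have h1 : e.symm ⟨ρ x, MonoidHom.mem_range.mpr ⟨x, rfl⟩⟩ = QuotientGroup.mk x := by
      rw [MulEquiv.symm_apply_eq]
      rfl
    simp only [hδ, MonoidHom.comp_apply, MulEquiv.coe_toMonoidHom, h1]
    rfl
  have hδsurj : Function.Surjective δ := by
    intro g
    obtain ⟨x, hx⟩ := hsurj g
    exact ⟨⟨ρ x, MonoidHom.mem_range.mpr ⟨x, rfl⟩⟩, by rw [hnat x, hx]⟩
  have hδexp : ∀ ℓ : ℕ, (∀ x ∈ γ.ker, x ^ ℓ = 1) → ∀ y ∈ δ.ker, y ^ ℓ = 1 := by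
    intro ℓ hexp y hy
    obtain ⟨x, hx⟩ := y.2
    have hxk : x ∈ γ.ker := by
      rw [MonoidHom.mem_ker]
      rw [← hnat x]
      have : (⟨ρ x, MonoidHom.mem_range.mpr ⟨x, rfl⟩⟩ : ρ.range) = y := Subtype.ext hx
      rw [this]
      exact MonoidHom.mem_ker.mp hy
    have := hexp x hxk
    apply Subtype.ext
    push_cast [← hx]
    rw [← map_pow, this, map_one]
  have hδmin : ∀ H' : Subgroup ρ.range, H'.map δ = ⊤ → H' = ⊤ := by
    intro H hH
    set H' : Subgroup G' := H.comap ρ.rangeRestrict with hH'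
    have hmap : H'.map γ = ⊤ := by
      rw [Subgroup.eq_top_iff']
      intro g
      have : g ∈ H.map δ := hH ▸ Subgroup.mem_top g
      obtain ⟨y, hyH, hyg⟩ := this
      obtain ⟨x, hx⟩ := y.2
      have hxy : ρ.rangeRestrict x = y := Subtype.ext hx
      refine ⟨x, show x ∈ H' by rw [hH', Subgroup.mem_comap, hxy]; exact hyH, ?_⟩
      rw [← hnat x]
      have : (⟨ρ x, MonoidHom.mem_range.mpr ⟨x, rfl⟩⟩ : ρ.range) = y := Subtype.ext hx
      rw [this, hyg]
    have := hmin H' hmap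
    rw [Subgroup.eq_top_iff']
    intro y
    obtain ⟨x, hx⟩ := y.2
    have hxy : ρ.rangeRestrict x = y := Subtype.ext hx
    have : x ∈ H' := this ▸ Subgroup.mem_top x
    rw [← hxy]
    exact this
  exact ⟨δ, hnat, ⟨hδsurj, ⟨ℓ0, hℓ0, hδexp ℓ0 hexp0⟩, hδmin⟩,
    fun ℓ _ hexp => ⟨hδsurj, hδexp ℓ hexp, hδmin⟩⟩
end
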